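/- arXiv:math/0701348 — 4 statements merged into one kernel-verified Lean document; each statement's English description precedes it below -/
import Mathlib

section
/- Let $M > 0$, and let $\alpha = a/q + z$ with $a, q$ coprime integers, $q \geq 1$, and $|z| \leq (2qM)^{-1}$. Suppose $m \in \mathbb{Z}$ satisfies $|m| \leq M$ and $\|\alpha m\| < Q^{-1}$ for some real $Q \geq 2q$, where $\|x\|$ denotes the distance from $x$ to the nearest integer. Then $q \mid m$. -/
/-- Lemma 2.3 of Heath-Brown (as quoted in the paper): let `M > 0` and
`α = a/q + z` with `gcd(a,q) = 1`, `q ≥ 1` and `|z| ≤ (2qM)⁻¹`.  If `m ∈ ℤ`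
satisfies `|m| ≤ M` and `‖αm‖ < Q⁻¹` for some `Q ≥ 2q` (the distance to the
nearest integer being witnessed by `k`), then `q ∣ m`. -/
theorem stmt_1 (M : ℝ) (hM : 0 < M) (a q : ℤ) (hq : 1 ≤ q)
    (hcop : Int.gcd a q = 1) (z : ℝ) (hz : |z| ≤ 1 / (2 * (q : ℝ) * M))
    (m : ℤ) (hm : |(m : ℝ)| ≤ M) (Q : ℝ) (hQ : 2 * (q : ℝ) ≤ Q)
    (k : ℤ) (hk : |((a : ℝ) / (q : ℝ) + z) * (m : ℝ) - (k : ℝ)| < 1 / Q) :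
    q ∣ m := by
  have hq0 : (0:ℝ) < q := by exact_mod_cast hq
  have hQ0 : (0:ℝ) < Q := by linarith
  have hzm : |z * (m:ℝ)| ≤ 1 / (2 * (q:ℝ)) := by
    rw [abs_mul]
    calc |z| * |(m:ℝ)| ≤ (1 / (2 * (q:ℝ) * M)) * M :=
          mul_le_mul hz hm (abs_nonneg _) (by positivity)
      _ = 1 / (2 * (q:ℝ)) := by field_simp
  have h1Q : 1 / Q ≤ 1 / (2 * (q:ℝ)) :=
    one_div_le_one_div_of_le (by positivity) hQ
  have key : |(a:ℝ) * m / q - k| < 1 / q := by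
    have h1 : (a:ℝ) * m / q - k = (((a:ℝ)/q + z) * m - k) - z * m := by ring
    have h2 := abs_sub (((a:ℝ)/q + z) * m - k) (z * m)
    rw [h1]
    calc |(((a:ℝ)/q + z) * m - k) - z * m|
        ≤ |(((a:ℝ)/q + z) * m - k)| + |z * m| := abs_sub _ _
      _ < 1/Q + 1/(2*(q:ℝ)) := by linarith
      _ ≤ 1/(2*(q:ℝ)) + 1/(2*(q:ℝ)) := by linarith
      _ = 1/(q:ℝ) := by rw [← add_div]; ring_nf
  have key2 : |(a:ℝ) * m - k * q| < 1 := by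
    have heqd : |(a:ℝ)*m - k*q| = |(a:ℝ) * m / q - k| * q := by
      have h3 : ((a:ℝ) * m / q - k) * q = (a:ℝ)*m - k*q := by
        field_simp
      rw [← h3, abs_mul, abs_of_pos hq0]
    rw [heqd]
    calc |(a:ℝ) * m / q - k| * q < (1/q) * q :=
          mul_lt_mul_of_pos_right key hq0
      _ = 1 := by field_simp
  have keyz : |a * m - k * q| < 1 := by
    have : |((a * m - k * q : ℤ) : ℝ)| < 1 := by push_cast; exact key2
    exact_mod_cast this
  have heq : a * m - k * q = 0 := Int.abs_lt_one_iff.mp keyz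
  have hdvd : q ∣ a * m := ⟨k, by linear_combination heq⟩
  exact (Int.isCoprime_iff_gcd_eq_one.mpr (by rwa [Int.gcd_comm] at hcop)).dvd_of_dvd_mul_left hdvd
end

section
/- Let $M > 0$, $\alpha = a/q + z$ with $\gcd(a,q) = 1$, $q \geq 1$, and $|z| \leq (2qM)^{-1}$. Suppose $m \in \mathbb{Z}$ satisfies $|m| \leq M$ and $\|\alpha m\| < Q^{-1}$ for some $Q \geq 2q$. If additionally $M < q$, then $m = 0$. -/
/-- Lemma 2.3 of Heath-Brown, second part: with `M > 0`, `α = a/q + z`,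
`gcd(a,q) = 1`, `q ≥ 1`, `|z| ≤ (2qM)⁻¹`, `|m| ≤ M` and `‖αm‖ < Q⁻¹` for some
`Q ≥ 2q`; if in addition `M < q`, then `m = 0`. -/
theorem stmt_2 (M : ℝ) (hM : 0 < M) (a q : ℤ) (hq : 1 ≤ q)
    (hcop : Int.gcd a q = 1) (z : ℝ) (hz : |z| ≤ 1 / (2 * (q : ℝ) * M))
    (m : ℤ) (hm : |(m : ℝ)| ≤ M) (Q : ℝ) (hQ : 2 * (q : ℝ) ≤ Q)
    (k : ℤ) (hk : |((a : ℝ) / (q : ℝ) + z) * (m : ℝ) - (k : ℝ)| < 1 / Q)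
    (hMq : M < (q : ℝ)) :
    m = 0 := by
  have hq0 : (0 : ℝ) < (q : ℝ) := by exact_mod_cast hq
  have h2q : (0 : ℝ) < 2 * (q : ℝ) := by linarith
  have hQ0 : (0 : ℝ) < Q := lt_of_lt_of_le h2q hQ
  -- |z * m| ≤ 1/(2q)
  have hzm : |z * (m : ℝ)| ≤ 1 / (2 * (q : ℝ)) := by
    rw [abs_mul]
    calc |z| * |(m : ℝ)| ≤ (1 / (2 * (q : ℝ) * M)) * M := by
          apply mul_le_mul hz hm (abs_nonneg _)
          positivity
      _ = 1 / (2 * (q : ℝ)) := by field_simp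
  have hQq : 1 / Q ≤ 1 / (2 * (q : ℝ)) := one_div_le_one_div_of_le h2q hQ
  -- |a*m/q - k| < 1/q
  have key : |(a : ℝ) * m / q - k| < 1 / q := by
    have h1 : |(a : ℝ) * m / q - k| ≤
        |((a : ℝ) / q + z) * m - k| + |z * m| := by
      have : (a : ℝ) * m / q - k = (((a : ℝ)/q + z) * m - k) + (-(z * m)) := by ring
      rw [this]
      exact (abs_add_le _ _).trans (by rw [abs_neg])
    have : |(a : ℝ) * m / q - k| < 1 / (2*q) + 1 / (2*q) := by
      calc |(a : ℝ) * m / q - k| ≤ |((a : ℝ)/q + z) * m - k| + |z * m| := h1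
        _ < 1 / Q + 1 / (2*q) := by linarith
        _ ≤ 1 / (2*q) + 1 / (2*q) := by linarith
    calc |(a : ℝ) * m / q - k| < 1 / (2*q) + 1 / (2*q) := this
      _ = 1 / q := by rw [← add_div, show (1:ℝ)+1 = 2 by norm_num, mul_comm, ← div_div]; rw [div_right_comm]; norm_num
  -- hence |a*m - k*q| < 1 so a*m = k*q
  have heq : a * m = k * q := by
    have h2 : |((a * m - k * q : ℤ) : ℝ)| < 1 := by
      have : ((a * m - k * q : ℤ) : ℝ) = ((a:ℝ) * m / q - k) * q := by
        push_cast; field_simp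
      rw [this, abs_mul, abs_of_pos hq0]
      calc |(a : ℝ) * m / q - k| * q < (1/q) * q := by
            exact mul_lt_mul_of_pos_right key hq0
        _ = 1 := by field_simp
    have h3 : |a * m - k * q| < 1 := by exact_mod_cast h2
    have := Int.abs_lt_one_iff.mp h3
    omega
  -- q ∣ m
  have hdvd : q ∣ m := by
    have : q ∣ m * a := ⟨k, by linarith [heq]⟩
    exact (Int.isCoprime_iff_gcd_eq_one.mpr (Int.gcd_comm a q ▸ hcop)).dvd_of_dvd_mul_right this
  -- |m| < q forces m = 0
  have hmq : |m| < q := by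
    have : |(m : ℝ)| < q := lt_of_le_of_lt hm hMq
    exact_mod_cast (by rw [← Int.cast_abs] at this; exact_mod_cast this : ((|m| : ℤ) : ℝ) < q)
  exact Int.eq_zero_of_abs_lt_dvd hdvd hmq
end

section
/- Let $n \geq 2$. There exists a constant $C_1 > 0$, depending only on $n$, with the following property: for every $A > 0$ and every real $M \geq 1$, the number of primitive integer vectors $\mathbf{m} \in \mathbb{Z}^n$ with $|\mathbf{m}| \leq M$ for which there exists a nonzero primitive integer vector $\mathbf{e} \in \mathbb{Z}^n$ with $\mathbf{m}\cdot\mathbf{e} = 0$ and $|\mathbf{e}| \leq A |\mathbf{m}|^{1/(n-1)}$, is at most $A^{n-1} C_1 M^n$. -/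
open Finset

lemma bezout {n : ℕ} (e : Fin n → ℤ)
    (h : Finset.univ.gcd (fun i => (e i).natAbs) = 1) :
    ∃ c : Fin n → ℤ, ∑ j, c j * e j = 1 := by
  have h1 : (1 : ℤ) ∈ Ideal.span (Set.range e) := by
    obtain ⟨d, hd'⟩ := Submodule.IsPrincipal.principal (Ideal.span (Set.range e))
    have hd : Ideal.span (Set.range e) = Ideal.span {d} := hd'
    have hdvd : ∀ j, d ∣ e j := fun j => by
      rw [← Ideal.mem_span_singleton, ← hd]
      exact Ideal.subset_span ⟨j, rfl⟩
    have : d.natAbs ∣ Finset.univ.gcd (fun i => (e i).natAbs) :=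
      Finset.dvd_gcd fun i _ => Int.natAbs_dvd_natAbs.mpr (hdvd i)
    rw [h, Nat.dvd_one] at this
    have : IsUnit d := Int.isUnit_iff.mpr (Int.natAbs_eq_iff.mp this |>.imp id id)
    rw [hd, Ideal.span_singleton_eq_top.mpr this]
    trivial
  obtain ⟨c, hc⟩ := (Submodule.mem_span_range_iff_exists_fun ℤ).mp h1
  exact ⟨c, by simpa [smul_eq_mul] using hc⟩

lemma residue_count (q : ℕ) (hq : 0 < q) (a b : ℤ) (r : ZMod q) :
    ((Finset.Icc a b).filter (fun x : ℤ => ((x : ZMod q) = r))).card ≤ (b - a).toNat / q + 1 := by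
  classical
  have key : ∀ x ∈ (Finset.Icc a b).filter (fun x : ℤ => ((x : ZMod q) = r)),
      (x - a).toNat / q ∈ Finset.range ((b - a).toNat / q + 1) := by
    intro x hx
    simp only [mem_filter, Finset.mem_Icc] at hx
    rw [Finset.mem_range, Nat.lt_succ_iff]
    exact Nat.div_le_div_right (by omega)
  have inj : Set.InjOn (fun x : ℤ => (x - a).toNat / q)
      ((Finset.Icc a b).filter (fun x : ℤ => ((x : ZMod q) = r))) := by
    intro x hx y hy hxy
    simp only [coe_filter, Set.mem_setOf_eq, Finset.mem_Icc] at hx hy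
    have h1 : ((x : ZMod q)) = (y : ZMod q) := hx.2.trans hy.2.symm
    have hdvd : (q : ℤ) ∣ y - x := ((ZMod.intCast_eq_intCast_iff _ _ _).mp h1).dvd
    obtain ⟨k, hk⟩ := hdvd
    simp only at hxy
    rcases le_or_gt 0 k with hk0 | hk0
    · have e1 : ((y - a).toNat : ℤ) = ((x - a).toNat : ℤ) + (q : ℤ) * (k.toNat : ℤ) := by
        rw [Int.toNat_of_nonneg (by omega : (0:ℤ) ≤ y - a),
          Int.toNat_of_nonneg (by omega : (0:ℤ) ≤ x - a), Int.toNat_of_nonneg hk0]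
        linarith [hk]
      have h2 : (y - a).toNat = (x - a).toNat + q * k.toNat := by exact_mod_cast e1
      rw [h2, Nat.add_mul_div_left _ _ hq] at hxy
      have hk1 : k = 0 := by omega
      rw [hk1, mul_zero] at hk
      omega
    · have e1 : ((x - a).toNat : ℤ) = ((y - a).toNat : ℤ) + (q : ℤ) * ((-k).toNat : ℤ) := by
        rw [Int.toNat_of_nonneg (by omega : (0:ℤ) ≤ y - a),
          Int.toNat_of_nonneg (by omega : (0:ℤ) ≤ x - a), Int.toNat_of_nonneg (by omega : (0:ℤ) ≤ -k)]
        linarith [hk]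
      have h2 : (x - a).toNat = (y - a).toNat + q * (-k).toNat := by exact_mod_cast e1
      rw [h2, Nat.add_mul_div_left _ _ hq] at hxy
      have hk1 : k = 0 := by omega
      rw [hk1, mul_zero] at hk
      omega
  simpa using Finset.card_le_card_of_injOn _ key inj
open Finset

lemma ker_card {n : ℕ} (hn : 2 ≤ n) (q : ℕ) [NeZero q] (e : Fin n → ℤ) (i : Fin n)
    (hei : ((e i : ZMod q)) = 0) (c : Fin n → ℤ) (hc : ∑ j, c j * e j = 1) :
    (Finset.univ.filter (fun r : Fin n → ZMod q =>
      (∑ j, (e j : ZMod q) * r j = 0) ∧ r i = 0)).card = q ^ (n - 2) := by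
  have hq : 0 < q := Nat.pos_of_ne_zero (NeZero.ne q)
  set f : (Fin n → ZMod q) →+ (ZMod q) × (ZMod q) :=
    AddMonoidHom.mk' (fun r => (∑ j, (e j : ZMod q) * r j, r i)) (by
      intro a b
      ext <;> simp [mul_add, Finset.sum_add_distrib]) with hf
  have hsurj : Function.Surjective f := by
    rintro ⟨a, b⟩
    refine ⟨fun j => if j = i then b else (c j : ZMod q) * a, ?_⟩
    have h1 : ∑ j, (e j : ZMod q) * (if j = i then b else (c j : ZMod q) * a) = a := by
      rw [← Finset.add_sum_erase _ _ (Finset.mem_univ i)]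
      simp only [if_pos rfl, hei, zero_mul, zero_add]
      have h2 : ∀ j ∈ Finset.univ.erase i,
          (e j : ZMod q) * (if j = i then b else (c j : ZMod q) * a)
          = ((c j : ZMod q) * (e j : ZMod q)) * a := by
        intro j hj
        rw [if_neg (Finset.mem_erase.mp hj).1]
        ring
      rw [Finset.sum_congr rfl h2, ← Finset.sum_mul]
      have h3 : ∑ j ∈ Finset.univ.erase i, (c j : ZMod q) * (e j : ZMod q) = 1 := by
        have h4 : ∑ j, (c j : ZMod q) * (e j : ZMod q) = 1 := by
          have := congrArg (fun z : ℤ => (z : ZMod q)) hc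
          push_cast at this
          simpa using this
        rw [← Finset.add_sum_erase _ _ (Finset.mem_univ i), hei] at h4
        simpa using h4
      rw [h3, one_mul]
    have h2 : (if i = i then b else (c i : ZMod q) * a) = b := if_pos rfl
    exact Prod.ext h1 h2
  -- cardinality of the kernel
  have hcard : Nat.card (Fin n → ZMod q)
      = Nat.card ((ZMod q) × (ZMod q)) * Nat.card f.ker := by
    rw [AddSubgroup.card_eq_card_quotient_mul_card_addSubgroup f.ker]
    congr 1
    exact Nat.card_congr (QuotientAddGroup.quotientKerEquivOfSurjective f hsurj).toEquiv
  have h5 : Nat.card (Fin n → ZMod q) = q ^ n := by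
    simp [Nat.card_eq_fintype_card, ZMod.card]
  have h6 : Nat.card ((ZMod q) × (ZMod q)) = q ^ 2 := by
    simp [Nat.card_eq_fintype_card, ZMod.card, sq]
  have h7 : (Finset.univ.filter (fun r : Fin n → ZMod q =>
      (∑ j, (e j : ZMod q) * r j = 0) ∧ r i = 0)).card = Nat.card f.ker := by
    rw [Nat.card_eq_fintype_card, Fintype.card_subtype]
    congr 1
    ext r
    simp only [AddMonoidHom.mem_ker, hf, AddMonoidHom.mk'_apply, Prod.mk_eq_zero]
  have h8 : q ^ n = q ^ 2 * q ^ (n - 2) := by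
    have h : 2 + (n - 2) = n := Nat.add_sub_cancel' hn
    rw [← pow_add, h]
  have h9 : q ^ 2 * q ^ (n - 2) = q ^ 2 * Nat.card f.ker := by
    rw [← h8, ← h5, ← h6]; exact hcard
  exact h7.trans (Nat.eq_of_mul_eq_mul_left (pow_pos hq 2) h9).symm
lemma Te_card {n : ℕ} (hn : 2 ≤ n) (M₀ : ℤ) (hM₀ : 0 ≤ M₀) (e : Fin n → ℤ) (he : e ≠ 0)
    (hprim : Finset.univ.gcd (fun i => (e i).natAbs) = 1) :
    ((Fintype.piFinset fun _ : Fin n => Finset.Icc (-M₀) M₀).filter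
        (fun m => ∑ i, m i * e i = 0)).card
      ≤ (Finset.univ.sup fun i => (e i).natAbs) ^ (n - 2)
        * ((2 * M₀).toNat / (Finset.univ.sup fun i => (e i).natAbs) + 1) ^ (n - 1) := by
  classical
  haveI : NeZero n := ⟨by omega⟩
  set q : ℕ := Finset.univ.sup fun i => (e i).natAbs with hqdef
  have hq : 0 < q := by
    by_contra h
    push_neg at h
    apply he
    funext j
    have : (e j).natAbs ≤ q := Finset.le_sup (f := fun i => (e i).natAbs) (Finset.mem_univ j)
    simp only [Pi.zero_apply]
    omega
  haveI : NeZero q := ⟨hq.ne'⟩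
  obtain ⟨i, -, hi⟩ := Finset.exists_mem_eq_sup Finset.univ univ_nonempty
      (fun i => (e i).natAbs)
  have hi' : (e i).natAbs = q := hi.symm
  have hei : ((e i : ZMod q)) = 0 := by
    rw [ZMod.intCast_zmod_eq_zero_iff_dvd]
    exact hi' ▸ Int.natAbs_dvd.mpr dvd_rfl
  have heine : e i ≠ 0 := by
    intro h; rw [h] at hi'; simp at hi'; omega
  set B : ℕ := (2 * M₀).toNat / q + 1 with hBdef
  set T := ((Fintype.piFinset fun _ : Fin n => Finset.Icc (-M₀) M₀).filter
      (fun m => ∑ i, m i * e i = 0)) with hTdef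
  set U := ((Fintype.piFinset fun j : Fin n =>
        if j = i then ({0} : Finset ℤ) else Finset.Icc (-M₀) M₀).filter
      (fun x => (∑ j, (e j : ZMod q) * (x j : ZMod q)) = 0)) with hUdef
  -- step 1 : T.card ≤ U.card
  have step1 : T.card ≤ U.card := by
    apply Finset.card_le_card_of_injOn (fun m => Function.update m i 0)
    · intro m hm
      simp only [hTdef, Finset.mem_coe, Finset.mem_filter, Fintype.mem_piFinset] at hm
      obtain ⟨hbox, hsum⟩ := hm
      simp only [hUdef, Finset.mem_coe, Finset.mem_filter, Fintype.mem_piFinset]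
      refine ⟨fun j => ?_, ?_⟩
      · by_cases hj : j = i
        · subst hj; simp
        · simp only [if_neg hj, Function.update_of_ne hj]
          exact hbox j
      · have h0 : ∀ j, (e j : ZMod q) * ((Function.update m i 0 j : ℤ) : ZMod q)
            = (e j : ZMod q) * (m j : ZMod q)
              - (if j = i then (e i : ZMod q) * (m i : ZMod q) else 0) := by
          intro j
          by_cases hj : j = i
          · subst hj; simp
          · simp [Function.update_of_ne hj, hj]
        rw [Finset.sum_congr rfl (fun j _ => h0 j), Finset.sum_sub_distrib]
        have h1 : (∑ j, (e j : ZMod q) * (m j : ZMod q)) = 0 := by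
          have h2 := congrArg (fun z : ℤ => (z : ZMod q)) hsum
          push_cast at h2
          rw [← h2]
          apply Finset.sum_congr rfl
          intros; ring
        rw [h1, Finset.sum_ite_eq' Finset.univ i, if_pos (Finset.mem_univ i), hei]
        ring
    · intro m hm m' hm' hmm
      simp only [hTdef, Finset.coe_filter, Set.mem_setOf_eq, Fintype.mem_piFinset] at hm hm'
      have hjj : ∀ j, j ≠ i → m j = m' j := by
        intro j hj
        have := congrFun hmm j
        simpa [Function.update_of_ne hj] using this
      funext j
      by_cases hj : j = i
      · subst hj
        have hA := Finset.add_sum_erase Finset.univ (fun k => m k * e k) (Finset.mem_univ j)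
        have hB := Finset.add_sum_erase Finset.univ (fun k => m' k * e k) (Finset.mem_univ j)
        have hrest : ∑ k ∈ Finset.univ.erase j, m k * e k
            = ∑ k ∈ Finset.univ.erase j, m' k * e k := by
          apply Finset.sum_congr rfl
          intro k hk
          rw [hjj k (Finset.mem_erase.mp hk).1]
        have : m j * e j = m' j * e j := by
          rw [hm.2] at hA
          rw [hm'.2] at hB
          linarith [hA, hB, hrest]
        exact mul_right_cancel₀ heine this
      · exact hjj j hj
  -- step 2 : U.card ≤ B ^ (n-1) * q ^ (n-2)
  set K := (Finset.univ.filter (fun r : Fin n → ZMod q =>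
      (∑ j, (e j : ZMod q) * r j = 0) ∧ r i = 0)) with hKdef
  have step2 : U.card ≤ B ^ (n - 1) * K.card := by
    apply Finset.card_le_mul_card_image_of_maps_to
        (f := fun (x : Fin n → ℤ) (j : Fin n) => ((x j : ℤ) : ZMod q))
    · intro x hx
      simp only [hUdef, Finset.mem_filter, Fintype.mem_piFinset] at hx
      simp only [hKdef, Finset.mem_filter, Finset.mem_univ, true_and]
      refine ⟨hx.2, ?_⟩
      have := hx.1 i
      rw [if_pos rfl, Finset.mem_singleton] at this
      rw [this]; simp
    · intro r hr
      calc (U.filter fun x => (fun j => ((x j : ℤ) : ZMod q)) = r).card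
          ≤ (Fintype.piFinset fun j : Fin n =>
              if j = i then ({0} : Finset ℤ)
              else (Finset.Icc (-M₀) M₀).filter (fun y : ℤ => ((y : ZMod q) = r j))).card := by
            apply Finset.card_le_card
            intro x hx
            simp only [Finset.mem_filter, hUdef, Fintype.mem_piFinset] at hx
            obtain ⟨⟨hbox, -⟩, hres⟩ := hx
            rw [Fintype.mem_piFinset]
            intro j
            by_cases hj : j = i
            · subst hj; simpa using hbox j
            · rw [if_neg hj]
              rw [Finset.mem_filter]
              have := hbox j
              rw [if_neg hj] at this
              exact ⟨this, congrFun hres j⟩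
        _ ≤ B ^ (n - 1) := by
            rw [Fintype.card_piFinset]
            calc ∏ j, (if j = i then ({0} : Finset ℤ)
                  else (Finset.Icc (-M₀) M₀).filter (fun y : ℤ => ((y : ZMod q) = r j))).card
                ≤ ∏ j, (if j = i then 1 else B) := by
                  apply Finset.prod_le_prod'
                  intro j _
                  by_cases hj : j = i
                  · simp [hj]
                  · rw [if_neg hj, if_neg hj]
                    have := residue_count q hq (-M₀) M₀ (r j)
                    have h2 : M₀ - (-M₀) = 2 * M₀ := by ring
                    rw [h2] at this
                    exact this
              _ = B ^ (n - 1) := by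
                  rw [← Finset.prod_erase_mul _ _ (Finset.mem_univ i), if_pos rfl, mul_one]
                  rw [Finset.prod_congr rfl (fun j hj => if_neg (Finset.mem_erase.mp hj).1),
                    Finset.prod_const, Finset.card_erase_of_mem (Finset.mem_univ i),
                    Finset.card_univ, Fintype.card_fin]
  obtain ⟨c, hc⟩ := bezout e hprim
  have hK : K.card = q ^ (n - 2) := ker_card hn q e i hei c hc
  calc T.card ≤ B ^ (n - 1) * K.card := step1.trans step2
    _ = q ^ (n - 2) * B ^ (n - 1) := by rw [hK]; ring

lemma pow_sub_pow_le' (a b : ℝ) (hb : 0 ≤ b) (hab : b ≤ a) (k : ℕ) :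
    a ^ (k + 1) - b ^ (k + 1) ≤ (k + 1 : ℝ) * (a - b) * a ^ k := by
  induction k with
  | zero => simp
  | succ k ih =>
    have ha : 0 ≤ a := hb.trans hab
    have hpow : b ^ (k + 1) ≤ a ^ (k + 1) := pow_le_pow_left₀ hb hab _
    have h1 : a ^ (k + 2) - b ^ (k + 2)
        = a * (a ^ (k + 1) - b ^ (k + 1)) + (a - b) * b ^ (k + 1) := by ring
    have h2 : a * (a ^ (k + 1) - b ^ (k + 1)) ≤ a * ((k + 1 : ℝ) * (a - b) * a ^ k) :=
      mul_le_mul_of_nonneg_left ih ha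
    have h3 : (a - b) * b ^ (k + 1) ≤ (a - b) * a ^ (k + 1) :=
      mul_le_mul_of_nonneg_left hpow (by linarith)
    have h4 : a * ((k + 1 : ℝ) * (a - b) * a ^ k) = (k + 1 : ℝ) * (a - b) * a ^ (k + 1) := by
      ring
    push_cast
    nlinarith [h1, h2, h3, h4]

lemma two_pow_bound (a b : ℝ) (ha : 0 ≤ a) (hb : 0 ≤ b) (k : ℕ) :
    (a + b) ^ k ≤ 2 ^ k * (a ^ k + b ^ k) := by
  have h1 : a + b ≤ 2 * max a b := by
    rcases le_total a b with h | h
    · simp [max_eq_right h]; linarith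
    · simp [max_eq_left h]; linarith
  have h2 : (a + b) ^ k ≤ (2 * max a b) ^ k :=
    pow_le_pow_left₀ (by linarith) h1 _
  rw [mul_pow] at h2
  refine h2.trans ?_
  apply mul_le_mul_of_nonneg_left _ (by positivity)
  rcases le_total a b with h | h
  · rw [max_eq_right h]
    nlinarith [pow_nonneg ha k]
  · rw [max_eq_left h]
    nlinarith [pow_nonneg hb k]

set_option maxHeartbeats 1000000

/-- Counting primitive vectors `m` of height at most `M` admitting a nonzero
primitive integer vector `e` with `m·e = 0` and `|e| ≤ A |m|^{1/(n-1)}`: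
the count is at most `A^{n-1} C₁ M^n` with `C₁` depending only on `n`. -/
theorem stmt_3 (n : ℕ) (hn : 2 ≤ n) :
    ∃ C₁ : ℝ, 0 < C₁ ∧ ∀ A : ℝ, 0 < A → ∀ M : ℝ, 1 ≤ M →
      (Nat.card {m : Fin n → ℤ //
          Finset.univ.gcd (fun i => (m i).natAbs) = 1 ∧
          (∀ i, |(m i : ℝ)| ≤ M) ∧
          ∃ e : Fin n → ℤ, e ≠ 0 ∧
            Finset.univ.gcd (fun i => (e i).natAbs) = 1 ∧
            (∑ i, m i * e i) = 0 ∧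
            ((Finset.univ.sup fun i => (e i).natAbs : ℕ) : ℝ)
              ≤ A * ((Finset.univ.sup fun i => (m i).natAbs : ℕ) : ℝ)
                    ^ ((1 : ℝ) / (n - 1))} : ℝ)
        ≤ A ^ (n - 1) * C₁ * M ^ n := by
  classical
  refine ⟨2*n*3^(n-1)*(4^(n-1) + 2^(n-1)*3^(n-1)) + 3^n, by positivity, ?_⟩
  intro A hA M hM
  have hn1 : 1 ≤ n := by omega
  have hn0 : 0 < n := by omega
  have hq21 : n - 2 + 1 = n - 1 := by omega
  have hq11 : n - 1 + 1 = n := by omega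
  have hq23 : (n-1) + (n-2) = 2*n-3 := by omega
  have hq31 : 2*n-3+1 = 2*n-2 := by omega
  have hq12 : (n-1)*2 = 2*n-2 := by omega
  set C₂ : ℝ := 2*n*3^(n-1)*(4^(n-1) + 2^(n-1)*3^(n-1)) with hC₂def
  have hC₂0 : 0 ≤ C₂ := by positivity
  have hMn : (0:ℝ) < M ^ n := by positivity
  have hAn : (0:ℝ) < A ^ (n-1) := by positivity
  set M₀ : ℤ := ⌊M⌋ with hM₀def
  have hM₀1 : 1 ≤ M₀ := by
    rw [hM₀def]; exact_mod_cast Int.le_floor.mpr (by exact_mod_cast hM)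
  have hM₀M : (M₀:ℝ) ≤ M := Int.floor_le M
  set box : Finset (Fin n → ℤ) := Fintype.piFinset fun _ : Fin n => Finset.Icc (-M₀) M₀
    with hboxdef
  set P : (Fin n → ℤ) → Prop := fun m =>
      Finset.univ.gcd (fun i => (m i).natAbs) = 1 ∧
      (∀ i, |(m i : ℝ)| ≤ M) ∧
      ∃ e : Fin n → ℤ, e ≠ 0 ∧
        Finset.univ.gcd (fun i => (e i).natAbs) = 1 ∧
        (∑ i, m i * e i) = 0 ∧
        ((Finset.univ.sup fun i => (e i).natAbs : ℕ) : ℝ)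
          ≤ A * ((Finset.univ.sup fun i => (m i).natAbs : ℕ) : ℝ)
                ^ ((1 : ℝ) / (n - 1)) with hPdef
  set F : Finset (Fin n → ℤ) := box.filter P with hFdef
  -- coordinates of an element satisfying `P` lie in the box
  have hmembox : ∀ m : Fin n → ℤ, P m → m ∈ box := by
    intro m hm
    rw [hboxdef, Fintype.mem_piFinset]
    intro i
    have h1 := hm.2.1 i
    rw [abs_le] at h1
    rw [Finset.mem_Icc]
    constructor
    · have : -(m i) ≤ M₀ := Int.le_floor.mpr (by push_cast; linarith [h1.1])
      omega
    · exact Int.le_floor.mpr h1.2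
  -- the subtype count is at most `F.card`
  have hcount : (Nat.card {m : Fin n → ℤ // P m} : ℝ) ≤ (F.card : ℝ) := by
    have hinj : Function.Injective
        (fun m : {m : Fin n → ℤ // P m} =>
          (⟨m.1, Finset.mem_filter.mpr ⟨hmembox m.1 m.2, m.2⟩⟩ : {x // x ∈ F})) := by
      intro x y h
      simp only [Subtype.mk.injEq] at h
      exact Subtype.ext h
    have := Nat.card_le_card_of_injective _ hinj
    rw [Nat.card_eq_finsetCard] at this
    exact_mod_cast this
  refine hcount.trans ?_
  rcases le_or_gt A 3 with hA3 | hA3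
  · -- main case : A ≤ 3
    have hnR : (2:ℝ) ≤ (n:ℝ) := by exact_mod_cast hn
    have hnpos : (0:ℝ) < (n:ℝ) - 1 := by linarith
    have hne : ((n:ℝ) - 1) ≠ 0 := ne_of_gt hnpos
    have hex0 : 0 ≤ (1:ℝ)/((n:ℝ)-1) := by positivity
    have hM0 : (0:ℝ) ≤ M := by linarith
    set Br : ℝ := A * M ^ ((1:ℝ)/((n:ℝ)-1)) with hBrdef
    have hBr0 : 0 ≤ Br := mul_nonneg hA.le (Real.rpow_nonneg hM0 _)
    set N : ℕ := ⌊Br⌋₊ with hNdef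
    have hNBr : (N:ℝ) ≤ Br := Nat.floor_le hBr0
    set Eset : Finset (Fin n → ℤ) := (Fintype.piFinset fun _ : Fin n =>
        Finset.Icc (-(N:ℤ)) (N:ℤ)).filter
        (fun e => e ≠ 0 ∧ Finset.univ.gcd (fun i => (e i).natAbs) = 1) with hEdef
    set Tf : (Fin n → ℤ) → Finset (Fin n → ℤ) :=
        fun e => box.filter (fun m => ∑ i, m i * e i = 0) with hTfdef
    set qf : (Fin n → ℤ) → ℕ := fun e => Finset.univ.sup fun i => (e i).natAbs with hqfdef
    -- every element of F lies in some Tf e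
    have hsub : F ⊆ Eset.biUnion Tf := by
      intro m hm
      rw [hFdef, Finset.mem_filter] at hm
      obtain ⟨hmbox, hgcd, habs, e, he0, hegcd, hdot, hebd⟩ := hm
      have hmbox' := hmbox
      rw [hboxdef, Fintype.mem_piFinset] at hmbox'
      have hsupm : ((Finset.univ.sup fun i => (m i).natAbs : ℕ) : ℝ) ≤ M := by
        have h1 : (Finset.univ.sup fun i => (m i).natAbs) ≤ M₀.toNat := by
          apply Finset.sup_le
          intro i _
          have h2 := hmbox' i
          rw [Finset.mem_Icc] at h2
          omega
        have h3 : ((M₀.toNat : ℤ) : ℝ) = ((M₀ : ℤ) : ℝ) := by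
          rw [Int.toNat_of_nonneg (by omega : (0:ℤ) ≤ M₀)]
        calc ((Finset.univ.sup fun i => (m i).natAbs : ℕ) : ℝ) ≤ (M₀.toNat : ℝ) := by
              exact_mod_cast h1
          _ ≤ M := by push_cast at h3 ⊢; rw [h3]; exact hM₀M
      have hsupe : ((Finset.univ.sup fun i => (e i).natAbs : ℕ) : ℝ) ≤ Br := by
        refine hebd.trans ?_
        rw [hBrdef]
        apply mul_le_mul_of_nonneg_left _ hA.le
        exact Real.rpow_le_rpow (Nat.cast_nonneg _) hsupm hex0
      have hsupeN : (Finset.univ.sup fun i => (e i).natAbs) ≤ N := Nat.le_floor hsupe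
      rw [Finset.mem_biUnion]
      refine ⟨e, ?_, ?_⟩
      · rw [hEdef, Finset.mem_filter]
        refine ⟨?_, he0, hegcd⟩
        rw [Fintype.mem_piFinset]
        intro j
        have h4 : (e j).natAbs ≤ N :=
          le_trans (Finset.le_sup (f := fun i => (e i).natAbs) (Finset.mem_univ j)) hsupeN
        rw [Finset.mem_Icc]
        omega
      · rw [hTfdef]
        exact Finset.mem_filter.mpr ⟨hmbox, hdot⟩
    have hstep : (F.card : ℝ) ≤ ∑ e ∈ Eset, ((Tf e).card : ℝ) := by
      have h := (Finset.card_le_card hsub).trans (Finset.card_biUnion_le)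
      exact_mod_cast h
    -- the per-e bound
    set vv : ℕ → ℝ := fun E => 4^(n-1) * M^(n-1) / E + 2^(n-1) * (E:ℝ)^(n-2) with hvvdef
    have hq1 : ∀ e : Fin n → ℤ, e ≠ 0 → 1 ≤ qf e := by
      intro e he0
      rw [hqfdef]
      by_contra h
      push_neg at h
      apply he0
      funext j
      have h2 : (e j).natAbs ≤ Finset.univ.sup fun i => (e i).natAbs :=
        Finset.le_sup (f := fun i => (e i).natAbs) (Finset.mem_univ j)
      simp only [Pi.zero_apply]
      omega
    have hTe : ∀ e ∈ Eset, ((Tf e).card : ℝ) ≤ vv (qf e) := by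
      intro e he
      rw [hEdef, Finset.mem_filter] at he
      obtain ⟨hebox, he0, hegcd⟩ := he
      have hq1' : (1:ℕ) ≤ Finset.univ.sup fun i => (e i).natAbs := hq1 e he0
      have hqR : (1:ℝ) ≤ ((Finset.univ.sup fun i => (e i).natAbs : ℕ) : ℝ) := by
        exact_mod_cast hq1'
      have hq0 : (0:ℝ) < ((Finset.univ.sup fun i => (e i).natAbs : ℕ) : ℝ) := by linarith
      have hqne : ((Finset.univ.sup fun i => (e i).natAbs : ℕ) : ℝ) ≠ 0 := ne_of_gt hq0
      have h1 := Te_card hn M₀ (by linarith) e he0 hegcd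
      rw [← hboxdef] at h1
      simp only [hTfdef, hqfdef, hvvdef]
      set q : ℕ := Finset.univ.sup fun i => (e i).natAbs with hqdef2
      have h2 : ((box.filter (fun m => ∑ i, m i * e i = 0)).card : ℝ)
          ≤ (q:ℝ)^(n-2) * (((2*M₀).toNat / q + 1 : ℕ) : ℝ)^(n-1) := by exact_mod_cast h1
      have h3 : (((2*M₀).toNat / q + 1 : ℕ) : ℝ) ≤ 2*M/(q:ℝ) + 1 := by
        push_cast
        have h4 : (((2*M₀).toNat / q : ℕ) : ℝ) ≤ ((2*M₀).toNat : ℝ) / (q:ℝ) :=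
          Nat.cast_div_le
        have h5 : ((2*M₀).toNat : ℝ) ≤ 2*M := by
          have h6 : (((2*M₀).toNat : ℤ) : ℝ) = ((2*M₀ : ℤ) : ℝ) := by
            rw [Int.toNat_of_nonneg (by linarith : (0:ℤ) ≤ 2*M₀)]
          push_cast at h6 ⊢
          rw [h6]
          push_cast
          linarith
        have h7 : ((2*M₀).toNat : ℝ) / (q:ℝ) ≤ 2*M/(q:ℝ) :=
          div_le_div_of_nonneg_right h5 hq0.le
        linarith
      have h8 : ((box.filter (fun m => ∑ i, m i * e i = 0)).card : ℝ)
          ≤ (q:ℝ)^(n-2) * (2*M/(q:ℝ) + 1)^(n-1) :=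
        h2.trans (mul_le_mul_of_nonneg_left
          (pow_le_pow_left₀ (Nat.cast_nonneg _) h3 _) (by positivity))
      have h9 : (2*M/(q:ℝ) + 1)^(n-1) ≤ 2^(n-1) * ((2*M/(q:ℝ))^(n-1) + 1) := by
        have h9' := two_pow_bound (2*M/(q:ℝ)) 1 (by positivity) zero_le_one (n-1)
        simpa using h9'
      have h10 : (q:ℝ)^(n-2) * ((2*M/(q:ℝ) + 1)^(n-1))
          ≤ (q:ℝ)^(n-2) * (2^(n-1) * ((2*M/(q:ℝ))^(n-1) + 1)) :=
        mul_le_mul_of_nonneg_left h9 (by positivity)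
      have hqpow : (q:ℝ)^(n-1) = (q:ℝ)^(n-2) * q := by
        rw [← pow_succ, hq21]
      have key : (q:ℝ)^(n-2) * (2^(n-1) * ((2*M/(q:ℝ))^(n-1) + 1))
          = 4^(n-1) * M^(n-1) / (q:ℝ) + 2^(n-1) * (q:ℝ)^(n-2) := by
        have h4 : (4:ℝ)^(n-1) = 2^(n-1) * 2^(n-1) := by rw [← mul_pow]; norm_num
        rw [div_pow, mul_pow, hqpow, h4]
        field_simp
      linarith [h8, h10]
    -- grouping by the value of qf
    have hmaps : ∀ e ∈ Eset, qf e ∈ Finset.Icc 1 N := by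
      intro e he
      rw [hEdef, Finset.mem_filter] at he
      obtain ⟨hebox, he0, hegcd⟩ := he
      rw [Fintype.mem_piFinset] at hebox
      rw [Finset.mem_Icc]
      refine ⟨hq1 e he0, ?_⟩
      simp only [hqfdef]
      apply Finset.sup_le
      intro j _
      have hj := hebox j
      rw [Finset.mem_Icc] at hj
      omega
    have hgroup : ∑ e ∈ Eset, vv (qf e)
        = ∑ E ∈ Finset.Icc 1 N, ∑ e ∈ Eset.filter (fun e => qf e = E), vv (qf e) :=
      (Finset.sum_fiberwise_of_maps_to hmaps _).symm
    -- the shell bound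
    have hshell : ∀ E ∈ Finset.Icc 1 N,
        ((Eset.filter (fun e => qf e = E)).card : ℝ) ≤ 2*n*3^(n-1) * (E:ℝ)^(n-1) := by
      intro E hE
      rw [Finset.mem_Icc] at hE
      obtain ⟨hE1, hEN⟩ := hE
      set big := Fintype.piFinset fun _ : Fin n => Finset.Icc (-(E:ℤ)) (E:ℤ) with hbigdef
      set small := Fintype.piFinset fun _ : Fin n => Finset.Icc (-(E:ℤ)+1) ((E:ℤ)-1)
        with hsmalldef
      have hss : small ⊆ big := by
        intro x hx
        rw [hsmalldef, Fintype.mem_piFinset] at hx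
        rw [hbigdef, Fintype.mem_piFinset]
        intro j
        have hxj := hx j
        rw [Finset.mem_Icc] at hxj ⊢
        omega
      have hsubshell : Eset.filter (fun e => qf e = E) ⊆ big \ small := by
        intro e he'
        rw [Finset.mem_filter] at he'
        obtain ⟨heE, hqE⟩ := he'
        rw [hEdef, Finset.mem_filter] at heE
        obtain ⟨-, he0, -⟩ := heE
        have hsup : (Finset.univ.sup fun i => (e i).natAbs) = E := hqE
        rw [Finset.mem_sdiff]
        constructor
        · rw [hbigdef, Fintype.mem_piFinset]
          intro j
          have hj : (e j).natAbs ≤ E :=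
            hsup ▸ Finset.le_sup (f := fun i => (e i).natAbs) (Finset.mem_univ j)
          rw [Finset.mem_Icc]
          omega
        · intro hmem
          rw [hsmalldef, Fintype.mem_piFinset] at hmem
          haveI : Nonempty (Fin n) := ⟨⟨0, hn0⟩⟩
          obtain ⟨i, -, hi⟩ := Finset.exists_mem_eq_sup Finset.univ Finset.univ_nonempty
            (fun i => (e i).natAbs)
          have hiE : (e i).natAbs = E := by rw [← hsup, hi]
          have hmi := hmem i
          rw [Finset.mem_Icc] at hmi
          omega
      have hcardb : big.card = (2*E+1) ^ n := by
        rw [hbigdef, Fintype.card_piFinset, Finset.prod_const, Finset.card_univ,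
          Fintype.card_fin]
        congr 1
        rw [Int.card_Icc]
        omega
      have hcards : small.card = (2*E-1) ^ n := by
        rw [hsmalldef, Fintype.card_piFinset, Finset.prod_const, Finset.card_univ,
          Fintype.card_fin]
        congr 1
        rw [Int.card_Icc]
        omega
      have hle : (2*E-1)^n ≤ (2*E+1)^n := Nat.pow_le_pow_left (by omega) n
      have hcR : ((Eset.filter (fun e => qf e = E)).card : ℝ)
          ≤ ((2*E+1:ℕ):ℝ)^n - ((2*E-1:ℕ):ℝ)^n := by
        have hc : (Eset.filter (fun e => qf e = E)).card ≤ (2*E+1)^n - (2*E-1)^n := by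
          calc (Eset.filter (fun e => qf e = E)).card ≤ (big \ small).card :=
                Finset.card_le_card hsubshell
            _ = big.card - small.card := Finset.card_sdiff_of_subset hss
            _ = (2*E+1)^n - (2*E-1)^n := by rw [hcardb, hcards]
        calc ((Eset.filter (fun e => qf e = E)).card : ℝ)
            ≤ (((2*E+1)^n - (2*E-1)^n : ℕ) : ℝ) := by exact_mod_cast hc
          _ = ((2*E+1:ℕ):ℝ)^n - ((2*E-1:ℕ):ℝ)^n := by
              rw [Nat.cast_sub hle]
              push_cast
              ring
      have hEE : (1:ℝ) ≤ (E:ℝ) := by exact_mod_cast hE1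
      have ha : ((2*E+1:ℕ):ℝ) = 2*(E:ℝ)+1 := by push_cast; ring
      have hb : ((2*E-1:ℕ):ℝ) = 2*(E:ℝ)-1 := by
        rw [Nat.cast_sub (by linarith : 1 ≤ 2*E)]
        push_cast
        ring
      rw [ha, hb] at hcR
      have hps := pow_sub_pow_le' (2*(E:ℝ)+1) (2*(E:ℝ)-1) (by linarith) (by linarith) (n-1)
      rw [hq11] at hps
      have hcoef : ((n-1 : ℕ):ℝ) + 1 ≤ (n:ℝ) := by
        rw [Nat.cast_sub hn1]
        norm_num
      have hsimp : (2*(E:ℝ)+1) - (2*(E:ℝ)-1) = 2 := by ring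
      have hpow1 : (0:ℝ) ≤ (2*(E:ℝ)+1)^(n-1) := by positivity
      have hps2 : (2*(E:ℝ)+1)^n - (2*(E:ℝ)-1)^n ≤ (n:ℝ) * 2 * (2*(E:ℝ)+1)^(n-1) := by
        rw [hsimp] at hps
        have hmul := mul_le_mul_of_nonneg_right hcoef
          (by positivity : (0:ℝ) ≤ 2*(2*(E:ℝ)+1)^(n-1))
        linarith [hps, hmul]
      have hps3 : (2*(E:ℝ)+1)^(n-1) ≤ 3^(n-1) * (E:ℝ)^(n-1) := by
        rw [← mul_pow]
        apply pow_le_pow_left₀ (by linarith)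
        linarith
      calc ((Eset.filter (fun e => qf e = E)).card : ℝ)
          ≤ (2*(E:ℝ)+1)^n - (2*(E:ℝ)-1)^n := hcR
        _ ≤ (n:ℝ) * 2 * (2*(E:ℝ)+1)^(n-1) := hps2
        _ ≤ (n:ℝ) * 2 * (3^(n-1) * (E:ℝ)^(n-1)) := by
            apply mul_le_mul_of_nonneg_left hps3
            positivity
        _ = 2*n*3^(n-1) * (E:ℝ)^(n-1) := by ring
    -- sum over each fiber
    have hfibersum : ∀ E ∈ Finset.Icc 1 N,
        ∑ e ∈ Eset.filter (fun e => qf e = E), vv (qf e)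
          ≤ 2*(n:ℝ)*3^(n-1) * ((E:ℝ)^(n-1) * vv E) := by
      intro E hE
      have h1 : ∑ e ∈ Eset.filter (fun e => qf e = E), vv (qf e)
          = ((Eset.filter (fun e => qf e = E)).card : ℝ) * vv E := by
        rw [Finset.sum_congr rfl (fun e he => by rw [(Finset.mem_filter.mp he).2]),
          Finset.sum_const, nsmul_eq_mul]
      rw [h1]
      have hvv0 : 0 ≤ vv E := by
        simp only [hvvdef]
        positivity
      calc ((Eset.filter (fun e => qf e = E)).card : ℝ) * vv E
          ≤ (2*n*3^(n-1) * (E:ℝ)^(n-1)) * vv E :=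
            mul_le_mul_of_nonneg_right (hshell E hE) hvv0
        _ = 2*(n:ℝ)*3^(n-1) * ((E:ℝ)^(n-1) * vv E) := by ring
    -- per-E bound
    have hperE : ∀ E ∈ Finset.Icc 1 N,
        (E:ℝ)^(n-1) * vv E ≤ 4^(n-1)*M^(n-1)*(N:ℝ)^(n-2) + 2^(n-1)*(N:ℝ)^(2*n-3) := by
      intro E hE
      rw [Finset.mem_Icc] at hE
      have hE1 : (1:ℝ) ≤ (E:ℝ) := by exact_mod_cast hE.1
      have hEN : (E:ℝ) ≤ (N:ℝ) := by exact_mod_cast hE.2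
      have hE0 : (E:ℝ) ≠ 0 := by linarith
      simp only [hvvdef]
      have hp1 : (E:ℝ)^(n-1) = (E:ℝ)^(n-2) * E := by
        rw [← pow_succ, hq21]
      have hp2 : (E:ℝ)^(n-1) * (E:ℝ)^(n-2) = (E:ℝ)^(2*n-3) := by
        rw [← pow_add, hq23]
      have hsplit : (E:ℝ)^(n-1) * (4^(n-1)*M^(n-1)/(E:ℝ) + 2^(n-1)*(E:ℝ)^(n-2))
          = 4^(n-1)*M^(n-1)*(E:ℝ)^(n-2) + 2^(n-1)*(E:ℝ)^(2*n-3) := by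
        rw [mul_add]
        congr 1
        · rw [hp1]
          field_simp
        · rw [← hp2]
          ring
      rw [hsplit]
      have b1 : (E:ℝ)^(n-2) ≤ (N:ℝ)^(n-2) := pow_le_pow_left₀ (by linarith) hEN _
      have b2 : (E:ℝ)^(2*n-3) ≤ (N:ℝ)^(2*n-3) := pow_le_pow_left₀ (by linarith) hEN _
      have c1 := mul_le_mul_of_nonneg_left b1
        (show (0:ℝ) ≤ 4^(n-1)*M^(n-1) by positivity)
      have c2 := mul_le_mul_of_nonneg_left b2 (show (0:ℝ) ≤ (2:ℝ)^(n-1) by positivity)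
      linarith
    -- total
    set bd : ℝ := 2*(n:ℝ)*3^(n-1) * (4^(n-1)*M^(n-1)*(N:ℝ)^(n-2) + 2^(n-1)*(N:ℝ)^(2*n-3))
      with hbddef
    have htotal : ∑ e ∈ Eset, vv (qf e) ≤ (N:ℝ) * bd := by
      rw [hgroup]
      have hbd : ∀ E ∈ Finset.Icc 1 N,
          ∑ e ∈ Eset.filter (fun e => qf e = E), vv (qf e) ≤ bd := by
        intro E hE
        refine (hfibersum E hE).trans ?_
        rw [hbddef]
        exact mul_le_mul_of_nonneg_left (hperE E hE) (by positivity)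
      calc ∑ E ∈ Finset.Icc 1 N, ∑ e ∈ Eset.filter (fun e => qf e = E), vv (qf e)
          ≤ (Finset.Icc 1 N).card • bd := Finset.sum_le_card_nsmul _ _ _ hbd
        _ = (N:ℝ) * bd := by
            rw [Nat.card_Icc, nsmul_eq_mul]
            norm_num
    have hKey1 : (N:ℝ)^(n-1) ≤ A^(n-1) * M := by
      have k1 : (N:ℝ)^(n-1) ≤ Br^(n-1) := pow_le_pow_left₀ (Nat.cast_nonneg _) hNBr _
      have k2 : Br^(n-1) = A^(n-1) * (M ^ ((1:ℝ)/((n:ℝ)-1)))^(n-1) := by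
        rw [hBrdef, mul_pow]
      have k3 : (M ^ ((1:ℝ)/((n:ℝ)-1)))^(n-1) = M := by
        rw [← Real.rpow_natCast (M ^ ((1:ℝ)/((n:ℝ)-1))) (n-1), ← Real.rpow_mul hM0]
        have k4 : ((n-1 : ℕ):ℝ) = (n:ℝ) - 1 := by
          rw [Nat.cast_sub hn1]
          norm_num
        rw [k4, one_div, inv_mul_cancel₀ hne, Real.rpow_one]
      rw [k2, k3] at k1
      exact k1
    have hKey2 : (N:ℝ)^(2*n-2) ≤ 3^(n-1) * (A^(n-1) * M^n) := by
      have k1 : (N:ℝ)^(2*n-2) = ((N:ℝ)^(n-1))^2 := by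
        rw [← pow_mul, hq12]
      have k2 : ((N:ℝ)^(n-1))^2 ≤ (A^(n-1) * M)^2 :=
        pow_le_pow_left₀ (by positivity) hKey1 2
      have k4 : A^(n-1) ≤ 3^(n-1) := pow_le_pow_left₀ hA.le hA3 _
      have k5 : M^2 ≤ M^n := pow_le_pow_right₀ hM hn
      have k6 : A^(n-1)*(A^(n-1)*M^2) ≤ 3^(n-1)*(A^(n-1)*M^2) :=
        mul_le_mul_of_nonneg_right k4 (by positivity)
      have k7 : A^(n-1)*M^2 ≤ A^(n-1)*M^n := mul_le_mul_of_nonneg_left k5 (by positivity)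
      have k8 : 3^(n-1)*(A^(n-1)*M^2) ≤ 3^(n-1)*(A^(n-1)*M^n) :=
        mul_le_mul_of_nonneg_left k7 (by positivity)
      calc (N:ℝ)^(2*n-2) = ((N:ℝ)^(n-1))^2 := k1
        _ ≤ (A^(n-1) * M)^2 := k2
        _ = A^(n-1)*(A^(n-1)*M^2) := by ring
        _ ≤ 3^(n-1)*(A^(n-1)*M^2) := k6
        _ ≤ 3^(n-1)*(A^(n-1)*M^n) := k8
    have hNp1 : (N:ℝ)^(n-2)*(N:ℝ) = (N:ℝ)^(n-1) := by
      rw [← pow_succ, hq21]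
    have hNp2 : (N:ℝ)^(2*n-3)*(N:ℝ) = (N:ℝ)^(2*n-2) := by
      rw [← pow_succ, hq31]
    have hMp : M^(n-1)*M = M^n := by
      rw [← pow_succ, hq11]
    calc (F.card:ℝ) ≤ ∑ e ∈ Eset, ((Tf e).card:ℝ) := hstep
      _ ≤ ∑ e ∈ Eset, vv (qf e) := Finset.sum_le_sum hTe
      _ ≤ (N:ℝ) * bd := htotal
      _ = 2*(n:ℝ)*3^(n-1) * (4^(n-1)*M^(n-1)*(N:ℝ)^(n-1) + 2^(n-1)*(N:ℝ)^(2*n-2)) := by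
          rw [hbddef, ← hNp1, ← hNp2]
          ring
      _ ≤ 2*(n:ℝ)*3^(n-1) * (4^(n-1)*M^(n-1)*(A^(n-1)*M) + 2^(n-1)*(3^(n-1)*(A^(n-1)*M^n))) := by
          apply mul_le_mul_of_nonneg_left _ (by positivity)
          have c1 := mul_le_mul_of_nonneg_left hKey1
            (show (0:ℝ) ≤ 4^(n-1)*M^(n-1) by positivity)
          have c2 := mul_le_mul_of_nonneg_left hKey2 (show (0:ℝ) ≤ (2:ℝ)^(n-1) by positivity)
          linarith
      _ = A^(n-1) * C₂ * M^n := by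
          rw [hC₂def, ← hMp]
          ring
      _ ≤ A^(n-1) * (C₂ + 3^n) * M^n := by
          have hpos : (0:ℝ) ≤ A^(n-1) * 3^n * M^n := by positivity
          have hexp : A^(n-1) * (C₂ + 3^n) * M^n
              = A^(n-1) * C₂ * M^n + A^(n-1) * 3^n * M^n := by ring
          linarith
  · -- trivial case : A > 3
    have h1 : (F.card : ℝ) ≤ (box.card : ℝ) := by
      exact_mod_cast Finset.card_le_card (Finset.filter_subset _ _)
    have h2 : box.card = ((2*M₀).toNat + 1) ^ n := by
      rw [hboxdef, Fintype.card_piFinset]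
      rw [Finset.prod_const, Finset.card_univ, Fintype.card_fin]
      congr 1
      rw [Int.card_Icc]
      omega
    have e1 : (((2*M₀).toNat : ℤ) : ℝ) = ((2*M₀ : ℤ) : ℝ) := by
      rw [Int.toNat_of_nonneg (by omega : (0:ℤ) ≤ 2*M₀)]
    have h3 : (((2*M₀).toNat : ℕ) : ℝ) + 1 ≤ 3 * M := by
      push_cast at e1 ⊢
      rw [e1]
      push_cast
      linarith
    have h4 : (box.card : ℝ) ≤ (3*M)^n := by
      rw [h2]
      push_cast
      exact pow_le_pow_left₀ (by positivity) h3 n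
    have h5 : (1:ℝ) ≤ A ^ (n-1) := one_le_pow₀ (by linarith)
    calc (F.card:ℝ) ≤ (3*M)^n := h1.trans h4
      _ = 3^n * M^n := by rw [mul_pow]
      _ = 1 * (3^n * M^n) := (one_mul _).symm
      _ ≤ A^(n-1) * (3^n * M^n) :=
          mul_le_mul_of_nonneg_right h5 (by positivity)
      _ ≤ A^(n-1) * ((C₂ + 3^n) * M^n) := by
          apply mul_le_mul_of_nonneg_left _ hAn.le
          apply mul_le_mul_of_nonneg_right _ hMn.le
          linarith
      _ = A^(n-1) * (C₂ + 3^n) * M^n := by ring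
end

section
/- Let $q$ be a positive integer, and write $b = \prod_{p^e \| q,\, e \leq 2} p^e$ and $d = \prod_{p^e \| q,\, e \geq 3,\, e \text{ odd}} p$. Then there exists a positive integer $c$ such that $q = b c^2 d$, $d \mid c$, $\gcd(b, c^2 d) = 1$, and there exists a divisor $d_0$ of $d$ such that $c/(d_0 d)$ is a square-full integer. -/
/-!
Everything is a statement about exponents. A prime `p` with `p ^ k ∥ q` contributes `p ^ k` to
`b` when `k ≤ 2`, and `p ^ ⌊k/2⌋` to `c` and `p ^ (k mod 2)` to `d` when `k ≥ 3`, so `q = b c² d`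
with `b` coprime to `c d`. The exponent of `p` in `c / d` is then `⌊k/2⌋ - (k mod 2)`, which
equals `1` only for `k = 5`; taking `d₀` to be the product of the primes with `k = 5` makes every
exponent of `c / (d₀ d)` either `0` or at least `2`.
-/

namespace Nat

lemma factorization_prod_pow_of_prime {S : Finset ℕ} (hS : ∀ p ∈ S, p.Prime) (f : ℕ → ℕ)
    (r : ℕ) : (∏ p ∈ S, p ^ f p).factorization r = if r ∈ S then f r else 0 := by
  rw [factorization_prod fun p hp => pow_ne_zero _ (hS p hp).ne_zero, Finset.sum_apply',
    Finset.sum_congr rfl fun p hp => by rw [(hS p hp).factorization_pow, Finsupp.single_apply]]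
  simp [Finset.sum_ite_eq' S r f]

lemma coprime_of_factorization {a b : ℕ} (ha : a ≠ 0) (hb : b ≠ 0)
    (h : ∀ p, a.factorization p = 0 ∨ b.factorization p = 0) : a.Coprime b :=
  coprime_of_dvd fun p hp hpa hpb => by
    have := (hp.dvd_iff_one_le_factorization ha).1 hpa
    have := (hp.dvd_iff_one_le_factorization hb).1 hpb
    rcases h p with h | h <;> omega

lemma sq_dvd_of_factorization_ne_one {m p : ℕ} (hm : m ≠ 0) (h : ∀ r, m.factorization r ≠ 1)
    (hp : p.Prime) (hpm : p ∣ m) : p ^ 2 ∣ m := by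
  have := (hp.dvd_iff_one_le_factorization hm).1 hpm
  have := h p
  rw [hp.pow_dvd_iff_le_factorization hm]
  omega

end Nat

def exponentProd (q : ℕ) (P : ℕ → Prop) [DecidablePred P] (g : ℕ → ℕ) : ℕ :=
  ∏ p ∈ q.primeFactors.filter (fun p => P (q.factorization p)), p ^ g (q.factorization p)

section exponentProd

variable {q : ℕ} {P : ℕ → Prop} [DecidablePred P] {g : ℕ → ℕ}

lemma exponentProd_ne_zero : exponentProd q P g ≠ 0 :=
  Finset.prod_ne_zero_iff.2 fun _ hp =>
    pow_ne_zero _ (Nat.prime_of_mem_primeFactors (Finset.mem_filter.1 hp).1).ne_zero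

lemma factorization_exponentProd (r : ℕ) :
    (exponentProd q P g).factorization r =
      if q.factorization r ≠ 0 ∧ P (q.factorization r) then g (q.factorization r) else 0 := by
  rw [exponentProd, Nat.factorization_prod_pow_of_prime
    fun p hp => Nat.prime_of_mem_primeFactors (Finset.mem_filter.1 hp).1]
  simp [← Nat.support_factorization]

variable {Q : ℕ → Prop} [DecidablePred Q] {h : ℕ → ℕ}

lemma exponentProd_dvd_exponentProd (hPQ : ∀ k ≠ 0, P k → Q k ∧ g k ≤ h k) :
    exponentProd q P g ∣ exponentProd q Q h := by
  rw [← Nat.factorization_le_iff_dvd exponentProd_ne_zero exponentProd_ne_zero]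
  intro r
  simp only [factorization_exponentProd]
  grind

lemma coprime_exponentProd (hPQ : ∀ k, P k → ¬ Q k) :
    (exponentProd q P g).Coprime (exponentProd q Q h) :=
  Nat.coprime_of_factorization exponentProd_ne_zero exponentProd_ne_zero fun r => by
    simp only [factorization_exponentProd]
    grind

end exponentProd

/-- The factorisation `q = b c² d` of (2.2)/(6.4) of the paper: with
`b = ∏_{p^e ∥ q, e ≤ 2} p^e` and `d = ∏_{p^e ∥ q, e ≥ 3 odd} p`, there is a
positive integer `c` with `q = b c² d`, `d ∣ c`, `gcd(b, c²d) = 1`, and a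
divisor `d₀` of `d` such that `c/(d₀ d)` is square-full. -/
theorem stmt_8 (q : ℕ) (hq : 0 < q) (b d : ℕ)
    (hb : b = ∏ p ∈ q.primeFactors.filter (fun p => q.factorization p ≤ 2),
        p ^ (q.factorization p))
    (hd : d = ∏ p ∈ q.primeFactors.filter
        (fun p => 3 ≤ q.factorization p ∧ q.factorization p % 2 = 1), p) :
    ∃ c : ℕ, 0 < c ∧ q = b * c ^ 2 * d ∧ d ∣ c ∧ Nat.Coprime b (c ^ 2 * d) ∧
      ∃ d₀ : ℕ, d₀ ∣ d ∧ d₀ * d ∣ c ∧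
        ∀ p : ℕ, p.Prime → p ∣ c / (d₀ * d) → p ^ 2 ∣ c / (d₀ * d) := by
  replace hb : b = exponentProd q (· ≤ 2) id := hb
  replace hd : d = exponentProd q (fun k => 3 ≤ k ∧ k % 2 = 1) fun _ => 1 := by
    simp [hd, exponentProd]
  set c := exponentProd q (3 ≤ ·) (· / 2)
  set d₀ := exponentProd q (· = 5) fun _ => 1
  have hd0 : d ≠ 0 := hd ▸ exponentProd_ne_zero
  have hd₀d : d₀ * d ∣ c := by
    rw [← Nat.factorization_le_iff_dvd (mul_ne_zero exponentProd_ne_zero hd0)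
      exponentProd_ne_zero]
    intro r
    simp [Nat.factorization_mul, exponentProd_ne_zero, factorization_exponentProd, hd]
    grind
  refine ⟨c, Nat.pos_of_ne_zero exponentProd_ne_zero, ?_,
    hd ▸ exponentProd_dvd_exponentProd (by omega), ?_,
    d₀, hd ▸ exponentProd_dvd_exponentProd (by omega), hd₀d, fun p => ?_⟩
  · subst hb hd
    refine Nat.eq_of_factorization_eq hq.ne' (by simp [c, exponentProd_ne_zero]) fun r => ?_
    simp [Nat.factorization_mul, exponentProd_ne_zero, factorization_exponentProd, c]
    grind
  · subst hb hd
    exact ((coprime_exponentProd (by omega)).pow_right 2).mul_right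
      (coprime_exponentProd (by omega))
  · have hquot : c / (d₀ * d) ≠ 0 := (Nat.div_ne_zero_iff_of_dvd hd₀d).2
      ⟨exponentProd_ne_zero, mul_ne_zero exponentProd_ne_zero hd0⟩
    refine Nat.sq_dvd_of_factorization_ne_one hquot fun r => ?_
    rw [Nat.factorization_div hd₀d]
    simp [Nat.factorization_mul, exponentProd_ne_zero, factorization_exponentProd, hd, c, d₀]
    grind
end
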